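/- arXiv:1107.2341 — 4 statements merged into one kernel-verified Lean document; each statement's English description precedes it below -/
import Mathlib

section
/- With ψ as above, for all sufficiently large k, if r = (2^{k−1} − 1)(c/2^k + ln 2) for some |c| ≤ 4, then for all x with 2^{−k/2} < x < 1/(1.01k) one has ψ(x) < −2^{3−k}. -/
set_option maxHeartbeats 1000000

lemma aux_pow_bound (x : ℝ) (hx0 : 0 ≤ x) (hx1 : x ≤ 1) :
    ∀ n : ℕ, (1 - x) ^ n ≤ 1 - n * x + (n : ℝ) ^ 2 * x ^ 2 / 2 := by
  intro n
  induction n with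
  | zero => norm_num
  | succ n ih =>
    have h1x : (0:ℝ) ≤ 1 - x := by linarith
    have h := mul_le_mul_of_nonneg_left ih h1x
    have hx3 : (0:ℝ) ≤ x ^ 3 := by positivity
    have hn : (0:ℝ) ≤ (n:ℝ) := n.cast_nonneg
    rw [pow_succ]
    push_cast
    nlinarith [sq_nonneg x, mul_nonneg (mul_nonneg hn hn) hx3]

/-- With `r = (2^{k-1}-1)(c/2^k + ln 2)`, `|c| ≤ 4`, for all large `k` and all
`x ∈ (2^{-k/2}, 1/(1.01 k))` one has `ψ(x) < -2^{3-k}`. -/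
theorem stmt4 : ∃ k₀ : ℕ, ∀ k : ℕ, k₀ ≤ k → ∀ c : ℝ, |c| ≤ 4 →
    ∀ ψ : ℝ → ℝ,
    (∀ x : ℝ, ψ x = -x * Real.log x - (1 - x) * Real.log (1 - x)
      + ((2 ^ (k - 1) - 1) * (c / 2 ^ k + Real.log 2)) *
        Real.log (1 - (1 - x ^ k - (1 - x) ^ k) / (2 ^ (k - 1) - 1))) →
    ∀ x : ℝ, (2:ℝ) ^ (-(k:ℝ) / 2) < x → x < 1 / (1.01 * k) →
      ψ x < -(2:ℝ) ^ (3 - (k:ℝ)) := by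
  refine ⟨3000, ?_⟩
  intro k hk c hc ψ hψ x hxl hxr
  rw [hψ]
  set L := Real.log 2 with hLdef
  have hkR : (3000:ℝ) ≤ (k:ℝ) := by exact_mod_cast hk
  have hx0 : 0 < x := lt_trans (Real.rpow_pos_of_pos two_pos _) hxl
  have hkpos : (0:ℝ) < 1.01 * k := by nlinarith
  have hsx : x * (1.01 * k) < 1 := (lt_div_iff₀ hkpos).mp hxr
  have hs : (k:ℝ) * x < 100/101 := by nlinarith
  have h3000x : 3000 * x ≤ (k:ℝ) * x := mul_le_mul_of_nonneg_right hkR hx0.le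
  have hx1 : x < 1 := by nlinarith
  have h1x : (0:ℝ) < 1 - x := by linarith
  have hL1 : (0.6931:ℝ) < L := by
    rw [hLdef]; linarith [Real.log_two_gt_d9]
  have hL2 : L < 0.6932 := by
    rw [hLdef]; linarith [Real.log_two_lt_d9]
  -- epsilon = 4/2^k bounds
  have h2k : (40000:ℝ) ≤ 2 ^ k := by
    calc (40000:ℝ) ≤ 2 ^ 16 := by norm_num
    _ ≤ 2 ^ k := by apply pow_le_pow_right₀ one_le_two; omega
  have h2kpos : (0:ℝ) < 2 ^ k := by positivity
  have hε0 : (0:ℝ) < 4 / 2 ^ k := by positivity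
  have hε2 : (4:ℝ) / 2 ^ k ≤ 0.0001 := by
    rw [div_le_iff₀ h2kpos]; nlinarith
  -- bound on -x log x
  have hlogx : -Real.log x < (k:ℝ)/2 * L := by
    have h := Real.log_lt_log (Real.rpow_pos_of_pos two_pos (-(k:ℝ)/2)) hxl
    rw [Real.log_rpow two_pos] at h
    rw [hLdef]; linarith
  have h1 : -x * Real.log x ≤ x * ((k:ℝ)/2 * L) := by
    nlinarith [mul_le_mul_of_nonneg_left hlogx.le hx0.le]
  -- bound on -(1-x) log (1-x)
  have h2 : -(1 - x) * Real.log (1 - x) ≤ x := by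
    have h := Real.log_le_sub_one_of_pos (inv_pos.mpr h1x)
    rw [Real.log_inv] at h
    have hinv : (1 - x) * ((1 - x)⁻¹ - 1) = x := by field_simp; ring
    nlinarith [mul_le_mul_of_nonneg_left h h1x.le]
  -- M = 2^(k-1) - 1 bounds
  have hM2 : (2:ℝ) ≤ 2 ^ (k - 1) := by
    calc (2:ℝ) = 2 ^ 1 := (pow_one 2).symm
    _ ≤ 2 ^ (k - 1) := by apply pow_le_pow_right₀ one_le_two; omega
  have hM0 : (0:ℝ) < 2 ^ (k - 1) - 1 := by linarith
  -- u = 1 - x^k - (1-x)^k bounds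
  have hxk : x ^ k ≤ x := pow_le_of_le_one hx0.le hx1.le (by omega)
  have h1xk : (1 - x) ^ k ≤ 1 - x := pow_le_of_le_one h1x.le (by linarith) (by omega)
  have hu0 : 0 ≤ 1 - x ^ k - (1 - x) ^ k := by linarith
  have hu1 : 1 - x ^ k - (1 - x) ^ k < 1 := by
    nlinarith [pow_pos hx0 k, pow_pos h1x k]
  have hpos : 0 < 1 - (1 - x ^ k - (1 - x) ^ k) / (2 ^ (k - 1) - 1) := by
    have hq : (1 - x ^ k - (1 - x) ^ k) / (2 ^ (k - 1) - 1) < 1 := by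
      rw [div_lt_one hM0]; linarith
    linarith
  have hlog1 : Real.log (1 - (1 - x ^ k - (1 - x) ^ k) / (2 ^ (k - 1) - 1)) ≤
      -((1 - x ^ k - (1 - x) ^ k) / (2 ^ (k - 1) - 1)) := by
    have := Real.log_le_sub_one_of_pos hpos
    linarith
  -- r nonneg
  have hcneg : (-4:ℝ) ≤ c := neg_le_of_abs_le hc
  have hc4 : -((4:ℝ) / 2 ^ k) ≤ c / 2 ^ k := by
    rw [← neg_div]
    exact (div_le_div_iff_of_pos_right h2kpos).mpr hcneg
  have hr0 : 0 ≤ ((2:ℝ) ^ (k - 1) - 1) * (c / 2 ^ k + L) := by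
    apply mul_nonneg hM0.le
    linarith
  -- third term chain
  have h3a : ((2:ℝ) ^ (k - 1) - 1) * (c / 2 ^ k + L) *
        Real.log (1 - (1 - x ^ k - (1 - x) ^ k) / (2 ^ (k - 1) - 1))
      ≤ ((2:ℝ) ^ (k - 1) - 1) * (c / 2 ^ k + L) *
        (-((1 - x ^ k - (1 - x) ^ k) / (2 ^ (k - 1) - 1))) :=
    mul_le_mul_of_nonneg_left hlog1 hr0
  have h3b : ((2:ℝ) ^ (k - 1) - 1) * (c / 2 ^ k + L) *
        (-((1 - x ^ k - (1 - x) ^ k) / (2 ^ (k - 1) - 1)))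
      = -((c / 2 ^ k + L) * (1 - x ^ k - (1 - x) ^ k)) := by
    field_simp
  have h3c : -((c / 2 ^ k + L) * (1 - x ^ k - (1 - x) ^ k))
      ≤ -((L - 4 / 2 ^ k) * (1 - x ^ k - (1 - x) ^ k)) := by
    have hle : L - 4 / 2 ^ k ≤ c / 2 ^ k + L := by linarith
    nlinarith [mul_le_mul_of_nonneg_right hle hu0]
  -- lower bound on u
  have hbin := aux_pow_bound x hx0.le hx1.le k
  have hxk2 : x ^ k ≤ x ^ 2 := pow_le_pow_of_le_one hx0.le hx1.le (by omega)
  have hulb : (k:ℝ) * x - (k:ℝ) ^ 2 * x ^ 2 / 2 - x ^ 2 ≤ 1 - x ^ k - (1 - x) ^ k := by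
    linarith
  have hLε0 : (0:ℝ) ≤ L - 4 / 2 ^ k := by linarith
  have h3d : -((L - 4 / 2 ^ k) * (1 - x ^ k - (1 - x) ^ k))
      ≤ -((L - 4 / 2 ^ k) * ((k:ℝ) * x - (k:ℝ) ^ 2 * x ^ 2 / 2 - x ^ 2)) := by
    nlinarith [mul_le_mul_of_nonneg_left hulb hLε0]
  have h3 : ((2:ℝ) ^ (k - 1) - 1) * (c / 2 ^ k + L) *
        Real.log (1 - (1 - x ^ k - (1 - x) ^ k) / (2 ^ (k - 1) - 1))
      ≤ -((L - 4 / 2 ^ k) * ((k:ℝ) * x - (k:ℝ) ^ 2 * x ^ 2 / 2 - x ^ 2)) := by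
    linarith [h3a, h3b.le, h3b.ge, h3c, h3d]
  -- main numeric estimate
  have hmain : x * ((k:ℝ)/2 * L) + x +
      -((L - 4 / 2 ^ k) * ((k:ℝ) * x - (k:ℝ) ^ 2 * x ^ 2 / 2 - x ^ 2)) ≤ -x := by
    have hkx0 : (0:ℝ) ≤ (k:ℝ) * x := by positivity
    have hεs : (4 / 2 ^ k) * ((k:ℝ) * x) ≤ 0.0001 * ((k:ℝ) * x) :=
      mul_le_mul_of_nonneg_right hε2 hkx0
    have h50 : (0:ℝ) ≤ 50/101 - (k:ℝ) * x / 2 := by linarith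
    have hF1 : 0 ≤ (L - 4 / 2 ^ k) * ((k:ℝ) * x) * (50/101 - (k:ℝ) * x / 2) :=
      mul_nonneg (mul_nonneg hLε0 hkx0) h50
    have hx2x : x ^ 2 ≤ x := by nlinarith
    have hLs : 0.6931 * ((k:ℝ) * x) ≤ L * ((k:ℝ) * x) :=
      mul_le_mul_of_nonneg_right hL1.le hkx0
    have hLx2 : L * x ^ 2 ≤ 0.6932 * x := by nlinarith [sq_nonneg x]
    have hεx2 : (0:ℝ) ≤ (4 / 2 ^ k) * x ^ 2 := by positivity
    linarith [hF1, hεs, hLs, hLx2, hεx2, h3000x]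
  -- final comparison with -2^(3-k)
  have h2pow : (2:ℝ) ^ (3 - (k:ℝ)) < x := by
    have hlt : (2:ℝ) ^ (3 - (k:ℝ)) < (2:ℝ) ^ (-(k:ℝ)/2) := by
      rw [Real.rpow_lt_rpow_left_iff one_lt_two]
      linarith
    linarith
  linarith [h1, h2, h3, hmain, h2pow]
end

section
/- Fix ζ < 1/3 and λ > 0 with m₁ = λn. In a random hypergraph where each of n vertices supports edges so that the total number of supported edges is m₁, with high probability there is no vertex set S of size ζn supporting more than ζ(e³λ − ln ζ)n edges; in fact the first-moment bound C(n, ζn)·C(m₁, μn)·ζ^{μn} with μ = ζ(e³λ − ln ζ) is at most (eζ)^{ζn} = o(1). -/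
open Filter

/-- Entropy-type bound: `C(n,k) ≤ (e n / k)^k` for `k > 0`. -/
lemma choose_le_e_pow (n k : ℕ) (hk : 0 < k) :
    (n.choose k : ℝ) ≤ (Real.exp 1 * n / k) ^ k := by
  have hk0 : (0:ℝ) < (k:ℝ) := by exact_mod_cast hk
  have h1 : (n.choose k : ℝ) ≤ (n:ℝ) ^ k / (k.factorial : ℝ) := Nat.choose_le_pow_div k n
  have h2 : (k:ℝ) ^ k / (k.factorial : ℝ) ≤ Real.exp k :=
    Real.pow_div_factorial_le_exp (x := (k:ℝ)) (le_of_lt hk0) k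
  have hfact : (0:ℝ) < (k.factorial : ℝ) := by exact_mod_cast Nat.factorial_pos k
  have hek : Real.exp (k:ℝ) = Real.exp 1 ^ k := by
    rw [← Real.exp_one_rpow (k:ℝ), Real.rpow_natCast]
  calc (n.choose k : ℝ) ≤ (n:ℝ) ^ k / (k.factorial : ℝ) := h1
    _ = ((n:ℝ)/(k:ℝ)) ^ k * ((k:ℝ) ^ k / (k.factorial : ℝ)) := by
        field_simp
        rw [div_pow, div_mul_cancel₀ _ (by positivity)]
    _ ≤ ((n:ℝ)/(k:ℝ)) ^ k * Real.exp k := by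
        apply mul_le_mul_of_nonneg_left h2 (by positivity)
    _ = (Real.exp 1 * n / k) ^ k := by
        rw [hek, ← mul_pow]; congr 1; field_simp

/-- First-moment bound: for `0 < ζ < 1/3`, `λ > 0`, `μ = ζ(e³λ - ln ζ)`, and the planted
model with `m₁ = λn` critical edges, the first-moment quantity
`C(n,ζn)·C(m₁,μn)·ζ^{μn}` is at most `(eζ)^{ζn}`, which tends to `0` as `n → ∞`. -/
theorem stmt8 (ζ lam : ℝ) (hζ0 : 0 < ζ) (hζ : ζ < 1 / 3) (hlam : 0 < lam) :
    (∀ n m₁ a b : ℕ, (m₁ : ℝ) = lam * n → (a : ℝ) = ζ * n →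
      (b : ℝ) = ζ * (Real.exp 1 ^ 3 * lam - Real.log ζ) * n →
      (n.choose a : ℝ) * (m₁.choose b : ℝ) * ζ ^ b ≤ (Real.exp 1 * ζ) ^ (ζ * (n:ℝ))) ∧
    Tendsto (fun n : ℕ => (Real.exp 1 * ζ) ^ (ζ * (n:ℝ))) atTop (nhds 0) := by
  have he1 : (0:ℝ) < Real.exp 1 := Real.exp_pos 1
  have he3 : Real.exp 1 < 3 := by
    have := Real.exp_one_lt_d9; nlinarith
  have hlogζ : Real.log ζ < 0 := Real.log_neg hζ0 (by linarith)
  set ξ : ℝ := Real.exp 1 ^ 3 * lam - Real.log ζ with hξdef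
  have hξpos : 0 < ξ := by
    have : 0 < Real.exp 1 ^ 3 * lam := by positivity
    simp only [hξdef]; linarith
  constructor
  · intro n m₁ a b hm ha hb
    rcases Nat.eq_zero_or_pos n with hn | hn
    · subst hn
      have ha0 : a = 0 := by
        have : (a:ℝ) = 0 := by simpa using ha
        exact_mod_cast this
      have hb0 : b = 0 := by
        have : (b:ℝ) = 0 := by simpa using hb
        exact_mod_cast this
      subst ha0; subst hb0
      simp [Real.rpow_zero]
    · have hn0 : (0:ℝ) < (n:ℝ) := by exact_mod_cast hn
      have hapos : 0 < a := by
        have h' : (0:ℝ) < (a:ℝ) := by rw [ha]; positivity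
        exact_mod_cast h'
      have hbpos : 0 < b := by
        have h' : (0:ℝ) < (b:ℝ) := by rw [hb]; positivity
        exact_mod_cast h'
      have ha0 : (0:ℝ) < (a:ℝ) := by exact_mod_cast hapos
      have hb0 : (0:ℝ) < (b:ℝ) := by exact_mod_cast hbpos
      -- bound the first binomial
      have h1 : (n.choose a : ℝ) ≤ (Real.exp 1 / ζ) ^ a := by
        have := choose_le_e_pow n a hapos
        have heq : Real.exp 1 * (n:ℝ) / (a:ℝ) = Real.exp 1 / ζ := by
          rw [ha]; field_simp
        rwa [heq] at this
      -- bound the second binomial together with ζ^b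
      have h2 : (m₁.choose b : ℝ) * ζ ^ b ≤ Real.exp (-2) ^ b := by
        have hc := choose_le_e_pow m₁ b hbpos
        have key : Real.exp 1 * (m₁:ℝ) / (b:ℝ) * ζ = Real.exp 1 * lam / ξ := by
          have hξne : ξ ≠ 0 := hξpos.ne'
          rw [hm, hb]; field_simp
        have hbase : Real.exp 1 * lam / ξ ≤ Real.exp (-2) := by
          have he2 : Real.exp (-2) = 1 / Real.exp 1 ^ 2 := by
            rw [Real.exp_neg, one_div]
            congr 1
            rw [show (2:ℝ) = (1:ℝ) + 1 by norm_num, Real.exp_add]; ring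
          rw [he2, div_le_div_iff₀ hξpos (by positivity)]
          nlinarith [sq_nonneg (Real.exp 1), Real.exp_pos 1]
        calc (m₁.choose b : ℝ) * ζ ^ b
            ≤ (Real.exp 1 * (m₁:ℝ) / (b:ℝ)) ^ b * ζ ^ b := by
              apply mul_le_mul_of_nonneg_right hc (by positivity)
          _ = (Real.exp 1 * (m₁:ℝ) / (b:ℝ) * ζ) ^ b := by rw [mul_pow]
          _ = (Real.exp 1 * lam / ξ) ^ b := by rw [key]
          _ ≤ Real.exp (-2) ^ b := by
              apply pow_le_pow_left₀ (by positivity) hbase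
      -- combine
      have hrhs : (Real.exp 1 * ζ) ^ (ζ * (n:ℝ)) = (Real.exp 1 * ζ) ^ a := by
        rw [← ha, Real.rpow_natCast]
      rw [hrhs]
      have hξa : (b:ℝ) = ξ * a := by rw [hb, ha]; ring
      have h3 : Real.exp (-2) ^ b ≤ (ζ ^ 2) ^ a := by
        have hζ2 : ζ ^ 2 = Real.exp (2 * Real.log ζ) := by
          rw [two_mul, Real.exp_add, Real.exp_log hζ0]; ring
        rw [hζ2, ← Real.exp_nat_mul, ← Real.exp_nat_mul, Real.exp_le_exp]
        have : 0 < Real.exp 1 ^ 3 * lam := by positivity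
        nlinarith [ha0.le]
      calc (n.choose a : ℝ) * (m₁.choose b : ℝ) * ζ ^ b
          = (n.choose a : ℝ) * ((m₁.choose b : ℝ) * ζ ^ b) := by ring
        _ ≤ (Real.exp 1 / ζ) ^ a * (Real.exp (-2) ^ b) := by
            apply mul_le_mul h1 h2 (by positivity) (by positivity)
        _ ≤ (Real.exp 1 / ζ) ^ a * (ζ ^ 2) ^ a := by
            apply mul_le_mul_of_nonneg_left h3 (by positivity)
        _ = (Real.exp 1 * ζ) ^ a := by
            rw [← mul_pow]; congr 1; field_simp
  · have hbase : Real.exp 1 * ζ < 1 := by nlinarith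
    have hbase0 : (0:ℝ) < Real.exp 1 * ζ := by positivity
    have h1 : Tendsto (fun x : ℝ => (Real.exp 1 * ζ) ^ x) atTop (nhds 0) :=
      tendsto_rpow_atTop_of_base_lt_one _ (by linarith) hbase
    have h2 : Tendsto (fun n : ℕ => ζ * (n:ℝ)) atTop atTop :=
      (tendsto_natCast_atTop_atTop (R := ℝ)).const_mul_atTop hζ0
    exact h1.comp h2
end

section
/- Let 0 < ζ < 1/3, λ > 0, and set ξ = e³λ − ln ζ. Then (e/ζ)·(e λ/ξ)^ξ ≤ e·ζ, and hence ((e/ζ)(eλ/ξ)^ξ)^{ζn} → 0 as n → ∞ when ζ < 1/e. -/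
open Filter

/-- For `0 < ζ < 1/3`, `λ > 0`, and `ξ = e³λ - ln ζ`, one has
`(e/ζ)·(eλ/ξ)^ξ ≤ eζ`; hence `((e/ζ)(eλ/ξ)^ξ)^{ζn} → 0` as `n → ∞` when `ζ < 1/e`. -/
theorem stmt9 (ζ lam : ℝ) (hζ0 : 0 < ζ) (hζ : ζ < 1 / 3) (hlam : 0 < lam) :
    (Real.exp 1 / ζ) *
        (Real.exp 1 * lam / (Real.exp 1 ^ 3 * lam - Real.log ζ))
          ^ (Real.exp 1 ^ 3 * lam - Real.log ζ)
      ≤ Real.exp 1 * ζ ∧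
    (ζ < 1 / Real.exp 1 →
      Tendsto (fun n : ℕ =>
        ((Real.exp 1 / ζ) *
          (Real.exp 1 * lam / (Real.exp 1 ^ 3 * lam - Real.log ζ))
            ^ (Real.exp 1 ^ 3 * lam - Real.log ζ)) ^ (ζ * (n:ℝ)))
        atTop (nhds 0)) := by
  have he : (0:ℝ) < Real.exp 1 := Real.exp_pos 1
  have hlog : Real.log ζ < 0 := Real.log_neg hζ0 (by linarith)
  set ξ : ℝ := Real.exp 1 ^ 3 * lam - Real.log ζ with hξdef
  have he3 : 0 < Real.exp 1 ^ 3 * lam := by positivity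
  have hξ : 0 < ξ := by rw [hξdef]; linarith
  have hbase : 0 < Real.exp 1 * lam / ξ := by positivity
  have hdiv : Real.exp 1 * lam / ξ ≤ Real.exp (-2) := by
    have h1 : Real.exp 1 * lam / ξ ≤ Real.exp 1 * lam / (Real.exp 1 ^ 3 * lam) :=
      div_le_div_of_nonneg_left (by positivity) he3 (by rw [hξdef]; linarith)
    have h2 : Real.exp 1 * lam / (Real.exp 1 ^ 3 * lam) = Real.exp (-2) := by
      rw [show Real.exp 1 ^ 3 = Real.exp 3 by
        rw [show (3:ℝ) = 1 + 1 + 1 by norm_num, Real.exp_add, Real.exp_add]; ring]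
      rw [show (-2:ℝ) = 1 - 3 by norm_num, Real.exp_sub]
      field_simp
    linarith
  have hlogle : Real.log (Real.exp 1 * lam / ξ) ≤ -2 := by
    have := Real.log_le_log hbase hdiv
    rwa [Real.log_exp] at this
  have key : (Real.exp 1 * lam / ξ) ^ ξ ≤ ζ ^ 2 := by
    rw [Real.rpow_def_of_pos hbase]
    have hmul : Real.log (Real.exp 1 * lam / ξ) * ξ ≤ 2 * Real.log ζ := by
      have h3 : Real.log (Real.exp 1 * lam / ξ) * ξ ≤ (-2) * ξ := by
        apply mul_le_mul_of_nonneg_right hlogle hξ.le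
      have : (-2) * ξ = -2 * (Real.exp 1 ^ 3 * lam) + 2 * Real.log ζ := by
        rw [hξdef]; ring
      nlinarith
    calc Real.exp (Real.log (Real.exp 1 * lam / ξ) * ξ)
        ≤ Real.exp (2 * Real.log ζ) := Real.exp_le_exp.2 hmul
      _ = ζ ^ 2 := by
          rw [mul_comm, Real.exp_mul, Real.exp_log hζ0, Real.rpow_two]
  have main : (Real.exp 1 / ζ) * (Real.exp 1 * lam / ξ) ^ ξ ≤ Real.exp 1 * ζ := by
    have h4 : (Real.exp 1 / ζ) * (Real.exp 1 * lam / ξ) ^ ξ ≤ (Real.exp 1 / ζ) * ζ ^ 2 :=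
      mul_le_mul_of_nonneg_left key (by positivity)
    have h5 : (Real.exp 1 / ζ) * ζ ^ 2 = Real.exp 1 * ζ := by
      field_simp
    linarith
  refine ⟨main, fun hζe => ?_⟩
  set b : ℝ := (Real.exp 1 / ζ) * (Real.exp 1 * lam / ξ) ^ ξ with hb
  have hb0 : 0 < b := by
    rw [hb]; positivity
  have hb1 : b < 1 := by
    have : Real.exp 1 * ζ < Real.exp 1 * (1 / Real.exp 1) :=
      mul_lt_mul_of_pos_left hζe he
    have h6 : Real.exp 1 * (1 / Real.exp 1) = 1 := by field_simp
    linarith [main]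
  have htop : Tendsto (fun n : ℕ => ζ * (n:ℝ)) atTop atTop :=
    Tendsto.const_mul_atTop hζ0 tendsto_natCast_atTop_atTop
  exact (tendsto_rpow_atTop_of_base_lt_one b (by linarith) hb1).comp htop
end

section
/- For k ≥ 3 and r < (2^{k−1} − 1)·ln 2, with λ = kr/(2^{k−1} − 1), one has e^{−λ}·ln 2 < (1/n)·ln E[Z_e] + o(1), where (1/n)·ln E[Z_e] → ln 2 + r·ln(1 − 2^{1−k}). Equivalently: exp(−kr/(2^{k−1}−1))·ln 2 < ln 2 + r·ln(1 − 2^{1−k}) for all 0 < r < (2^{k−1}−1) ln 2 and k sufficiently large. -/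
open Real Set

lemma log_lt_half_sub_inv {t : ℝ} (ht : 1 < t) : Real.log t < (t - t⁻¹) / 2 := by
  have key : StrictMonoOn (fun s : ℝ => (s - s⁻¹) / 2 - Real.log s) (Set.Ici 1) := by
    apply strictMonoOn_of_deriv_pos (convex_Ici 1)
    · apply ContinuousOn.sub
      · exact (continuousOn_id.sub (continuousOn_id.inv₀ (fun x hx => by
          have h1 : (1:ℝ) ≤ x := hx
          simp only [id_eq]
          exact ne_of_gt (by linarith)))).div_const 2
      · exact Real.continuousOn_log.mono (fun x hx => by
          have : (1:ℝ) ≤ x := hx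
          simp only [Set.mem_compl_iff, Set.mem_singleton_iff]
          exact ne_of_gt (by linarith))
    · intro x hx
      rw [interior_Ici] at hx
      have hx1 : (1:ℝ) < x := hx
      have hx0 : (0:ℝ) < x := by linarith
      have h1 : HasDerivAt (fun s : ℝ => (s - s⁻¹) / 2 - Real.log s)
          ((1 - -(x ^ 2)⁻¹) / 2 - x⁻¹) x :=
        (((hasDerivAt_id x).sub (hasDerivAt_inv hx0.ne')).div_const 2).sub
          (Real.hasDerivAt_log hx0.ne')
      rw [h1.deriv]
      have ha : x⁻¹ < 1 := by
        rw [inv_lt_one_iff₀]; right; exact hx1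
      have ha0 : 0 < x⁻¹ := inv_pos.2 hx0
      rw [← inv_pow]
      nlinarith [sq_nonneg (1 - x⁻¹)]
  have h := key (Set.self_mem_Ici) (Set.mem_Ici.2 ht.le) ht
  simp only [Real.log_one, inv_one] at h
  linarith

/-- For all sufficiently large `k` and every `0 < r < (2^{k-1}-1) ln 2`, with
`λ = kr/(2^{k-1}-1)`, one has `e^{-λ} ln 2 < ln 2 + r ln(1 - 2^{1-k})`. -/
theorem stmt16 : ∃ k₀ : ℕ, ∀ k : ℕ, k₀ ≤ k → ∀ r : ℝ, 0 < r →
    r < (2 ^ (k - 1) - 1) * Real.log 2 →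
    Real.exp (-((k : ℝ) * r / (2 ^ (k - 1) - 1))) * Real.log 2
      < Real.log 2 + r * Real.log (1 - (2:ℝ) ^ (1 - (k:ℝ))) := by
  refine ⟨2, fun k hk r hr hr2 => ?_⟩
  set L := Real.log 2 with hLdef
  have hL : 0 < L := Real.log_pos (by norm_num)
  set N : ℝ := 2 ^ (k - 1) - 1 with hNdef
  have h2 : (2:ℝ) ≤ 2 ^ (k - 1) := by
    calc (2:ℝ) = 2 ^ 1 := (pow_one 2).symm
    _ ≤ 2 ^ (k - 1) := pow_le_pow_right₀ (by norm_num) (by omega)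
  have hN1 : 1 ≤ N := by simp only [hNdef]; linarith
  have hN0 : 0 < N := by linarith
  have hNp1 : (0:ℝ) < N + 1 := by linarith
  have hcast : (1 - (k:ℝ)) = -(((k - 1 : ℕ) : ℝ)) := by
    have h1k : (1:ℕ) ≤ k := by omega
    push_cast [Nat.cast_sub h1k]
    ring
  have hu : (2:ℝ) ^ (1 - (k:ℝ)) = (N + 1)⁻¹ := by
    rw [hcast, Real.rpow_neg (by norm_num), Real.rpow_natCast]
    congr 1
    simp only [hNdef]; ring
  have h1u : 1 - (2:ℝ) ^ (1 - (k:ℝ)) = N / (N + 1) := by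
    rw [hu]
    field_simp
    ring
  set t : ℝ := (N + 1) / N with htdef
  have ht1 : 1 < t := by
    rw [htdef, lt_div_iff₀ hN0]
    linarith
  have hlog1u : Real.log (1 - (2:ℝ) ^ (1 - (k:ℝ))) = -Real.log t := by
    rw [h1u, htdef, ← Real.log_inv]
    congr 1
    rw [inv_div]
  have hkey : Real.log t < (2 * N + 1) / (2 * N * (N + 1)) := by
    have h := log_lt_half_sub_inv ht1
    have heq : (t - t⁻¹) / 2 = (2 * N + 1) / (2 * N * (N + 1)) := by
      rw [htdef]
      field_simp
      ring
    linarith [heq ▸ h]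
  set t' : ℝ := r / (N * L) with ht'def
  have ht'0 : 0 < t' := by positivity
  have ht'1 : t' < 1 := by
    rw [ht'def, div_lt_one (by positivity)]
    linarith [hr2]
  have hexpk : Real.exp (-((k:ℝ) * L)) = (2 * (N + 1))⁻¹ := by
    rw [Real.exp_neg]
    congr 1
    rw [hLdef, Real.exp_nat_mul, Real.exp_log (by norm_num : (0:ℝ) < 2)]
    have hk1 : k - 1 + 1 = k := by omega
    calc (2:ℝ) ^ k = 2 ^ (k - 1 + 1) := by rw [hk1]
    _ = 2 ^ (k - 1) * 2 := pow_succ 2 (k - 1)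
    _ = 2 * (N + 1) := by simp only [hNdef]; ring
  -- convexity of exp
  have hconv := convexOn_exp.2 (Set.mem_univ (0:ℝ)) (Set.mem_univ (-((k:ℝ) * L)))
    (by linarith : (0:ℝ) ≤ 1 - t') ht'0.le (by ring)
  simp only [smul_eq_mul, mul_zero, zero_add, Real.exp_zero, mul_one, hexpk] at hconv
  have hxeq : t' * -((k:ℝ) * L) = -((k:ℝ) * r / N) := by
    rw [ht'def]
    field_simp
  rw [hxeq] at hconv
  -- hconv : exp (-(k*r/N)) ≤ (1 - t') + t' * (2*(N+1))⁻¹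
  have heq2 : ((1 - t') + t' * (2 * (N + 1))⁻¹) * L = L - r * ((2 * N + 1) / (2 * N * (N + 1))) := by
    rw [ht'def]
    field_simp
    ring
  have hstep : Real.exp (-((k:ℝ) * r / N)) * L ≤ L - r * ((2 * N + 1) / (2 * N * (N + 1))) := by
    calc Real.exp (-((k:ℝ) * r / N)) * L ≤ ((1 - t') + t' * (2 * (N + 1))⁻¹) * L :=
          mul_le_mul_of_nonneg_right hconv hL.le
    _ = _ := heq2
  rw [hlog1u]
  have hfin : r * Real.log t < r * ((2 * N + 1) / (2 * N * (N + 1))) :=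
    mul_lt_mul_of_pos_left hkey hr
  linarith
end
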